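/- Let k ≥ 2 and suppose the points a_{ij} satisfy the node condition: a_{ij} ≠ a_{ik} whenever j ≠ k, and a_{ji} ≠ a_{ki} whenever j ≠ k. Then ϑ evaluated at λ_{ij} = 0, μ_{ij} = 1 for all (i,j) ∈ P is nonzero, and ϑ evaluated at λ_{ij} = 1, μ_{ij} = 0 for all (i,j) ∈ P is nonzero. (Equivalently, the functions ϑ_{1,0} and ϑ_{0,1} do not vanish at the origin.) -/

import Mathlib

/-!
At `(λ, μ) = (1, 0)` the row `(i, j)` of `Ξ` is supported on the columns `(i, ·)`, where it reads
`(1, a_{ij}, …, a_{ij}^{k-2})`; so `Ξ` is, up to reordering rows and columns, block diagonal with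
`k` Vandermonde blocks, whose nodes `a_{ij}` (`j ≠ i`) are distinct. At `(λ, μ) = (0, 1)` the row
`(i, j)` is supported on the columns `(j, ·)`, and after permuting the rows by `(i, j) ↦ (j, i)`
the same picture appears with the nodes `a_{ji}` (`j ≠ i`).
-/

namespace ReducibleSpectral

noncomputable section

/-- The row index `(i, t)` (with `t : Fin (k-1)`) corresponds to the pair `(i, j) ∈ P`
(where `P = {(i,j) : i ≠ j}`), with `j` the `t`-th element of `{0,…,k-1} \ {i}`;
this identification is order-preserving for the lexicographic orders. -/
def colToRow (k : ℕ) (i : Fin k) (t : Fin (k - 1)) : Fin k :=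
  if (t : ℕ) < (i : ℕ) then ⟨t, by have := t.isLt; omega⟩
  else ⟨(t : ℕ) + 1, by have := t.isLt; have := i.isLt; omega⟩

/-- The matrix `Ξ(λ,μ)`: rows indexed by `P = {(i,j) : i ≠ j}` (in lexicographic order,
encoded via `colToRow`), columns indexed by pairs `(m,n)`, `m ∈ {1,…,k}`, `n ∈ {0,…,k-2}`
(lexicographic); the entry at row `(i,j)`, column `(m,n)` is `λ_{ij}·a_{ij}^n` if `m = i`,
`μ_{ij}·a_{ij}^n` if `m = j`, and `0` otherwise. -/
def Xi (k : ℕ) (a lam mu : Fin k → Fin k → ℂ) :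
    Matrix (Fin k × Fin (k - 1)) (Fin k × Fin (k - 1)) ℂ :=
  fun p q =>
    if q.1 = p.1 then lam p.1 (colToRow k p.1 p.2) * a p.1 (colToRow k p.1 p.2) ^ (q.2 : ℕ)
    else if q.1 = colToRow k p.1 p.2 then
      mu p.1 (colToRow k p.1 p.2) * a p.1 (colToRow k p.1 p.2) ^ (q.2 : ℕ)
    else 0

/-- The extended theta function `ϑ(λ,μ) = det Ξ(λ,μ)`. -/
def theta (k : ℕ) (a lam mu : Fin k → Fin k → ℂ) : ℂ := (Xi k a lam mu).det

/-- The index set `P = {(i,j) : i,j ∈ {1,…,k}, i ≠ j}` as a finset. -/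
def Pfin (k : ℕ) : Finset (Fin k × Fin k) :=
  Finset.univ.filter fun p => p.1 ≠ p.2

/-- For `L ⊆ P`, the set `L_i = {(i,j) ∈ L} ∪ {(m,i) ∈ P : (m,i) ∉ L}`. -/
def Lset (k : ℕ) (L : Finset (Fin k × Fin k)) (i : Fin k) : Finset (Fin k × Fin k) :=
  (L.filter fun p => p.1 = i) ∪ ((Pfin k \ L).filter fun p => p.2 = i)

/-- `L ⊆ P` is regular iff every `L_i` has cardinality `k - 1`. -/
def IsRegular (k : ℕ) (L : Finset (Fin k × Fin k)) : Prop :=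
  ∀ i : Fin k, (Lset k L i).card = k - 1

open Matrix Function

section BlockVandermonde

variable {R ι : Type*} [CommRing R] [DecidableEq ι] {m : ℕ}

def blockVandermonde (v : ι → Fin m → R) : Matrix (ι × Fin m) (ι × Fin m) R :=
  of fun p q => if q.1 = p.1 then v p.1 p.2 ^ (q.2 : ℕ) else 0

theorem blockVandermonde_eq_submatrix_blockDiagonal (v : ι → Fin m → R) :
    blockVandermonde v = (blockDiagonal fun i => vandermonde (v i)).submatrix
      (Equiv.prodComm _ _) (Equiv.prodComm _ _) := by
  ext p q
  simp [blockVandermonde, blockDiagonal_apply, vandermonde_apply, eq_comm]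

theorem det_blockVandermonde [Fintype ι] (v : ι → Fin m → R) :
    (blockVandermonde v).det = ∏ i, (vandermonde (v i)).det := by
  rw [blockVandermonde_eq_submatrix_blockDiagonal, det_submatrix_equiv_self, det_blockDiagonal]

theorem det_blockVandermonde_ne_zero [Fintype ι] [IsDomain R] {v : ι → Fin m → R}
    (hv : ∀ i, Injective (v i)) : (blockVandermonde v).det ≠ 0 := by
  rw [det_blockVandermonde]
  exact Finset.prod_ne_zero_iff.2 fun i _ => det_vandermonde_ne_zero_iff.2 (hv i)

end BlockVandermonde

section ColToRow

variable {k : ℕ}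

theorem colToRow_val (i : Fin k) (t : Fin (k - 1)) :
    (colToRow k i t : ℕ) = if (t : ℕ) < i then (t : ℕ) else t + 1 := by
  unfold colToRow; split <;> rfl

theorem colToRow_ne (i : Fin k) (t : Fin (k - 1)) : colToRow k i t ≠ i := by
  intro h
  have := congrArg Fin.val h
  rw [colToRow_val] at this
  split at this <;> omega

theorem colToRow_injective (i : Fin k) : Injective (colToRow k i) := by
  intro t t' h
  have := congrArg Fin.val h
  rw [colToRow_val, colToRow_val] at this
  ext
  split at this <;> split at this <;> omega

/-- If `(i, t)` encodes the pair `(i, j)`, then `swapPair k (i, t)` encodes `(j, i)`. -/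
def swapPairFun (k : ℕ) (p : Fin k × Fin (k - 1)) : Fin k × Fin (k - 1) :=
  (colToRow k p.1 p.2,
    ⟨if (p.2 : ℕ) < p.1 then (p.1 : ℕ) - 1 else p.1, by
      have := p.1.isLt; have := p.2.isLt; split <;> omega⟩)

theorem swapPairFun_involutive : Involutive (swapPairFun k) := by
  rintro ⟨i, t⟩
  have := i.isLt; have := t.isLt
  simp only [swapPairFun, Prod.mk.injEq, Fin.ext_iff, colToRow_val]
  constructor <;> split_ifs <;> omega

def swapPair (k : ℕ) : Equiv.Perm (Fin k × Fin (k - 1)) :=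
  swapPairFun_involutive.toPerm

theorem colToRow_swapPair (p : Fin k × Fin (k - 1)) :
    colToRow k (swapPair k p).1 (swapPair k p).2 = p.1 :=
  congrArg Prod.fst (swapPairFun_involutive p)

end ColToRow

section Nodes

variable {k : ℕ} {a : Fin k → Fin k → ℂ}

theorem injective_nodes_of_row_distinct
    (hrow : ∀ i j l : Fin k, i ≠ j → i ≠ l → j ≠ l → a i j ≠ a i l) (i : Fin k) :
    Injective fun t => a i (colToRow k i t) := by
  intro t t' h
  by_contra hne
  exact hrow i _ _ (colToRow_ne i t).symm (colToRow_ne i t').symm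
    ((colToRow_injective i).ne hne) h

theorem injective_nodes_of_col_distinct
    (hcol : ∀ i j l : Fin k, i ≠ j → i ≠ l → j ≠ l → a j i ≠ a l i) (i : Fin k) :
    Injective fun t => a (colToRow k i t) i := by
  intro t t' h
  by_contra hne
  exact hcol i _ _ (colToRow_ne i t).symm (colToRow_ne i t').symm
    ((colToRow_injective i).ne hne) h

end Nodes

theorem Xi_one_zero (k : ℕ) (a : Fin k → Fin k → ℂ) :
    Xi k a (fun _ _ => 1) (fun _ _ => 0) = blockVandermonde fun i t => a i (colToRow k i t) := by
  ext p q
  simp only [Xi, blockVandermonde, of_apply, one_mul, zero_mul, ite_self]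

theorem Xi_zero_one_submatrix_swapPair (k : ℕ) (a : Fin k → Fin k → ℂ) :
    (Xi k a (fun _ _ => 0) (fun _ _ => 1)).submatrix (swapPair k) id =
      blockVandermonde fun j s => a (colToRow k j s) j := by
  ext p q
  have hne : (swapPair k p).1 ≠ p.1 := colToRow_ne p.1 p.2
  simp only [Xi, blockVandermonde, submatrix_apply, of_apply, id_eq, colToRow_swapPair,
    zero_mul, one_mul]
  by_cases hq : q.1 = p.1
  · rw [if_neg (hq ▸ hne.symm), if_pos hq, if_pos hq]
    rfl
  · rw [if_neg hq, if_neg hq, ite_self]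

theorem theta_ne_zero_at_origin_general (k : ℕ) (a : Fin k → Fin k → ℂ)
    (hnode : ∀ i j l : Fin k, i ≠ j → i ≠ l → j ≠ l →
      a i j ≠ a i l ∧ a j i ≠ a l i) :
    theta k a (fun _ _ => 0) (fun _ _ => 1) ≠ 0 ∧
      theta k a (fun _ _ => 1) (fun _ _ => 0) ≠ 0 := by
  have hrow := injective_nodes_of_row_distinct fun i j l hij hil hjl =>
    (hnode i j l hij hil hjl).1
  have hcol := injective_nodes_of_col_distinct fun i j l hij hil hjl =>
    (hnode i j l hij hil hjl).2
  constructor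
  · have hswapped := det_blockVandermonde_ne_zero hcol
    rw [← Xi_zero_one_submatrix_swapPair, det_permute] at hswapped
    exact right_ne_zero_of_mul hswapped
  · rw [theta, Xi_one_zero]
    exact det_blockVandermonde_ne_zero hrow

/-- under the node condition (`a_{ij} ≠ a_{il}` and `a_{ji} ≠ a_{li}` for
`j ≠ l`), the theta function does not vanish at `(λ,μ) = (0,1)` nor at `(λ,μ) = (1,0)`;
equivalently, `ϑ_{1,0}` and `ϑ_{0,1}` do not vanish at the origin of the (compactified)
Jacobian. -/
theorem theta_ne_zero_at_origin (k : ℕ) (hk : 2 ≤ k) (a : Fin k → Fin k → ℂ)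
    (hnode : ∀ i j l : Fin k, i ≠ j → i ≠ l → j ≠ l →
      a i j ≠ a i l ∧ a j i ≠ a l i) :
    theta k a (fun _ _ => 0) (fun _ _ => 1) ≠ 0 ∧
      theta k a (fun _ _ => 1) (fun _ _ => 0) ≠ 0 :=
  theta_ne_zero_at_origin_general k a hnode

end

end ReducibleSpectral
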